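/- arXiv:2404.09141 — 2 statements merged into one kernel-verified Lean document; each statement's English description precedes it below -/
import Mathlib

section
/- Let d : Fin N_g → ℝ≥0 be nonnegative reals indexed by the G-element subsets of {1,...,K}, where N_g = C(K,G). Suppose that for every k ∈ {1,...,K}, M·(Σ over subsets containing k of d) + (Σ over subsets not containing k of d) ≤ M. Then the total sum Σ d ≤ M·K/(G·M + K - G). -/
/-- BCGM converse averaging argument: if for each receiver `k` the weighted per-receiver
bound `M·(Σ_{S ∋ k} d_S) + Σ_{S ∌ k} d_S ≤ M` holds, then the total sum is at most
`M·K/(G·M + K - G)`. Here the messages are indexed by the `G`-element subsets of `Fin K`. -/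
theorem bcgm_converse_averaging (K G M : ℕ) (hG : 1 ≤ G) (hGK : G ≤ K) (hM : 1 ≤ M)
    (d : Finset (Fin K) → ℝ)
    (hd : ∀ S ∈ Finset.powersetCard G (Finset.univ : Finset (Fin K)), 0 ≤ d S)
    (hbound : ∀ k : Fin K,
      (M : ℝ) * ∑ S ∈ (Finset.powersetCard G (Finset.univ : Finset (Fin K))).filter
          (fun S => k ∈ S), d S
        + ∑ S ∈ (Finset.powersetCard G (Finset.univ : Finset (Fin K))).filter
          (fun S => k ∉ S), d S ≤ (M : ℝ)) :
    ∑ S ∈ Finset.powersetCard G (Finset.univ : Finset (Fin K)), d S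
      ≤ (M * K : ℝ) / (G * M + K - G) := by
  set P := Finset.powersetCard G (Finset.univ : Finset (Fin K)) with hP
  set T := ∑ S ∈ P, d S with hT
  have hcard : ∀ S ∈ P, S.card = G := fun S hS => (Finset.mem_powersetCard.mp hS).2
  have h1 : ∑ k : Fin K, ∑ S ∈ P.filter (fun S => k ∈ S), d S = (G : ℝ) * T := by
    simp_rw [Finset.sum_filter]
    rw [Finset.sum_comm, hT, Finset.mul_sum]
    refine Finset.sum_congr rfl fun S hS => ?_
    rw [Finset.sum_ite_mem, Finset.univ_inter, Finset.sum_const, hcard S hS,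
      nsmul_eq_mul]
  have h2 : ∑ k : Fin K, ∑ S ∈ P.filter (fun S => k ∉ S), d S
      = ((K : ℝ) - G) * T := by
    simp_rw [Finset.sum_filter]
    rw [Finset.sum_comm, hT, Finset.mul_sum]
    refine Finset.sum_congr rfl fun S hS => ?_
    have : ∀ k : Fin K, (if k ∉ S then d S else 0) = (if k ∈ Finset.univ \ S then d S else 0) := by
      intro k; simp
    simp_rw [this]
    rw [Finset.sum_ite_mem, Finset.univ_inter, Finset.sum_const,
      Finset.card_sdiff_of_subset (Finset.subset_univ S), hcard S hS, Finset.card_univ,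
      Fintype.card_fin, nsmul_eq_mul]
    push_cast [hGK]
    ring
  have hsum : ((G : ℝ) * M + K - G) * T ≤ M * K := by
    have := Finset.sum_le_sum (fun k (_ : k ∈ (Finset.univ : Finset (Fin K))) => hbound k)
    rw [Finset.sum_add_distrib, ← Finset.mul_sum, h1, h2, Finset.sum_const,
      Finset.card_univ, Fintype.card_fin, nsmul_eq_mul] at this
    nlinarith [this]
  have hden : (0 : ℝ) < (G : ℝ) * M + K - G := by
    have hGM : (1 : ℝ) ≤ (G : ℝ) * M := by
      have : (1 : ℝ) * 1 ≤ (G : ℝ) * M := by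
        apply mul_le_mul <;> simp [hG, hM] <;> positivity
      linarith
    have : (G : ℝ) ≤ K := by exact_mod_cast hGK
    linarith
  rw [le_div_iff₀ hden]
  nlinarith [hsum]
end

section
/- Fix integers M ≥ 2 and N ≥ 1 and a subset V ⊆ {1,...,N}. Define a sequence p : {1,...,(M-1)^N} → {1,...,M-1} recursively: p(t) = t for t ≤ M-1 if 1 ∈ V, and p(t) = 1 for t ≤ M-1 if 1 ∉ V; for each n from 2 to N and i from 1 to M-2, for j ∈ {1,...,(M-1)^(n-1)}, set p(i·(M-1)^(n-1) + j) = Mod(p(j) + i, M-1) if n ∈ V, and p(i·(M-1)^(n-1) + j) = p(j) if n ∉ V. Then for every n ∈ {1,...,N}, every h ∈ {0,...,(M-1)^(N-n)-1}, i ∈ {0,...,M-2}, j ∈ {1,...,(M-1)^(n-1)}, writing t(h,i,j) = h·(M-1)^n + i·(M-1)^(n-1) + j: if n ∉ V then p(t(h,0,j)) = p(t(h,1,j)) = ... = p(t(h,M-2,j)); and if n ∈ V then p(t(h,i,j)) = Mod(p(t(h,0,j)) + i, M-1) for all i. -/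
/-- `Mod(a,m)`: the unique element of `{1,...,m}` congruent to `a` mod `m`
(for `a ≥ 1`, `m ≥ 1`). -/
def shiftedModNat (a m : ℕ) : ℕ := (a - 1) % m + 1

/-!
Write `t - 1` in base `m = M - 1` with digits `d₀, d₁, …`. Then
`p t = (∑_{k + 1 ∈ V} d_k) mod m + 1`: a block of level `n` of Algorithm 1 consists of the `t`
whose highest nonzero digit is `d_{n-1} = i`, and the recursion adds `i` exactly when `n ∈ V`.
Passing from `t(h,0,j)` to `t(h,i,j)` changes only the digit `d_{n-1}` of `t - 1`, from `0` to `i`.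
-/

open Finset

namespace SwitchingPattern

def digit (m k x : ℕ) : ℕ := x / m ^ k % m

lemma digit_mul_pow_add {m n q b : ℕ} (hb : b < m ^ n) (k : ℕ) :
    digit m k (q * m ^ n + b) = if k < n then digit m k b else digit m (k - n) q := by
  have hmn : 0 < m ^ n := by omega
  unfold digit
  split_ifs with hk
  · obtain ⟨d, rfl⟩ := Nat.exists_eq_add_of_lt hk
    have hm : 0 < m := Nat.pos_of_ne_zero fun h => by simp [h] at hmn
    rw [show q * m ^ (k + d + 1) + b = b + q * m ^ d * m * m ^ k by ring,
      Nat.add_mul_div_right _ _ (by positivity), Nat.add_mul_mod_self_right]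
  · obtain ⟨d, rfl⟩ := Nat.exists_eq_add_of_le (not_lt.mp hk)
    rw [Nat.add_sub_cancel_left, pow_add, ← Nat.div_div_eq_div_mul, mul_comm q,
      Nat.mul_add_div hmn, Nat.div_eq_of_lt hb, add_zero]

lemma digit_add_mul_pow_add {m n a c b : ℕ} (hc : c < m) (hb : b < m ^ n) (k : ℕ) :
    digit m k (a * m ^ (n + 1) + c * m ^ n + b) =
      if k = n then c else digit m k (a * m ^ (n + 1) + b) := by
  have hc' : c < m ^ 1 := by rwa [pow_one]
  rw [show a * m ^ (n + 1) + c * m ^ n + b = (a * m ^ 1 + c) * m ^ n + b by ring,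
    show a * m ^ (n + 1) + b = (a * m ^ 1 + 0) * m ^ n + b by ring,
    digit_mul_pow_add hb, digit_mul_pow_add hb, digit_mul_pow_add hc',
    digit_mul_pow_add (by omega : 0 < m ^ 1)]
  rcases lt_trichotomy k n with hk | rfl | hk
  · simp [hk, hk.ne]
  · simp [digit, Nat.mod_eq_of_lt hc]
  · have hkn : ¬ k < n := by omega
    have hkn' : ¬ k - n < 1 := by omega
    simp only [hk.ne', hkn, hkn', if_false]

lemma mul_pow_add_lt_pow {m n N a r : ℕ} (hn : n ≤ N) (ha : a < m ^ (N - n)) (hr : r < m ^ n) :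
    a * m ^ n + r < m ^ N :=
  calc a * m ^ n + r < (a + 1) * m ^ n := by rw [add_one_mul]; omega
    _ ≤ m ^ (N - n) * m ^ n := Nat.mul_le_mul_right _ ha
    _ = m ^ N := by rw [← pow_add, Nat.sub_add_cancel hn]

def activeDigitSum (m N : ℕ) (V : Finset ℕ) (x : ℕ) : ℕ :=
  ∑ k ∈ range N, if k + 1 ∈ V then digit m k x else 0

lemma activeDigitSum_add_mul_pow_add {m N n a c b : ℕ} (V : Finset ℕ) (hc : c < m)
    (hb : b < m ^ n) (hn : n < N) :
    activeDigitSum m N V (a * m ^ (n + 1) + c * m ^ n + b) =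
      activeDigitSum m N V (a * m ^ (n + 1) + b) + if n + 1 ∈ V then c else 0 := by
  have hterm : ∀ k ∈ range N,
      (if k + 1 ∈ V then digit m k (a * m ^ (n + 1) + c * m ^ n + b) else 0) =
        (if k + 1 ∈ V then digit m k (a * m ^ (n + 1) + b) else 0) +
          if n = k then (if n + 1 ∈ V then c else 0) else 0 := by
    intro k _
    rw [digit_add_mul_pow_add hc hb]
    rcases eq_or_ne n k with rfl | hnk
    · have hzero := digit_add_mul_pow_add (a := a) (by omega : 0 < m) hb n
      simp only [zero_mul, add_zero, if_true] at hzero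
      simp [hzero]
    · simp [hnk, hnk.symm]
  rw [activeDigitSum, activeDigitSum, sum_congr rfl hterm, sum_add_distrib, sum_ite_eq,
    if_pos (mem_range.mpr hn)]

lemma shiftedModNat_mod_add_one_add (s i m : ℕ) :
    shiftedModNat (s % m + 1 + i) m = (s + i) % m + 1 := by
  rw [shiftedModNat, add_right_comm, Nat.add_sub_cancel, Nat.mod_add_mod]

section Recursion

variable {m N : ℕ} {V : Finset ℕ} {p : ℕ → ℕ}
  (hbase : ∀ t, 1 ≤ t → t ≤ m → p t = if 1 ∈ V then t else 1)
  (hstep : ∀ n, 2 ≤ n → n ≤ N → ∀ i, 1 ≤ i → i < m →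
    ∀ j, 1 ≤ j → j ≤ m ^ (n - 1) →
    p (i * m ^ (n - 1) + j) = if n ∈ V then shiftedModNat (p j + i) m else p j)
include hbase hstep

lemma apply_mul_pow_add_succ {n i y : ℕ} (hn : n < N) (hi : 1 ≤ i) (him : i < m)
    (hy : y < m ^ n) :
    p (i * m ^ n + y + 1) = if n + 1 ∈ V then shiftedModNat (p (y + 1) + i) m else p (y + 1) := by
  cases n with
  | zero =>
    obtain rfl : y = 0 := by simpa using hy
    rw [pow_zero, mul_one, hbase (i + 1) (by omega) him, hbase 1 le_rfl (by omega)]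
    simp [shiftedModNat, Nat.mod_eq_of_lt him]
  | succ n =>
    simpa [add_assoc] using
      hstep (n + 2) (by omega) hn i hi him (y + 1) (by omega) (by simpa using hy)

lemma apply_succ_eq_activeDigitSum (hm : 0 < m) {n : ℕ} (hn : n ≤ N) {x : ℕ} (hx : x < m ^ n) :
    p (x + 1) = activeDigitSum m N V x % m + 1 := by
  induction n generalizing x with
  | zero =>
    obtain rfl : x = 0 := by simpa using hx
    simp [hbase 1 le_rfl hm, activeDigitSum, digit]
  | succ n ih =>
    obtain ⟨i, y, him, hy, rfl⟩ : ∃ i y, i < m ∧ y < m ^ n ∧ x = i * m ^ n + y :=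
      ⟨x / m ^ n, x % m ^ n, Nat.div_lt_of_lt_mul (by rwa [← pow_succ]),
        Nat.mod_lt _ (by positivity), (Nat.div_add_mod' x (m ^ n)).symm⟩
    have hsum := activeDigitSum_add_mul_pow_add (a := 0) V him hy hn
    simp only [zero_mul, zero_add] at hsum
    rcases Nat.eq_zero_or_pos i with rfl | hi
    · simpa using ih (by omega) hy
    · rw [apply_mul_pow_add_succ hbase hstep hn hi him hy, ih (by omega) hy, hsum]
      split_ifs
      · exact shiftedModNat_mod_add_one_add _ _ _
      · rfl

end Recursion

end SwitchingPattern

open SwitchingPattern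

theorem switching_pattern_alignment_general (M N : ℕ) (hM : 2 ≤ M)
    (V : Finset ℕ) (p : ℕ → ℕ)
    (hbase : ∀ t, 1 ≤ t → t ≤ M - 1 → p t = if 1 ∈ V then t else 1)
    (hstep : ∀ n, 2 ≤ n → n ≤ N → ∀ i, 1 ≤ i → i ≤ M - 2 →
      ∀ j, 1 ≤ j → j ≤ (M - 1) ^ (n - 1) →
      p (i * (M - 1) ^ (n - 1) + j)
        = if n ∈ V then shiftedModNat (p j + i) (M - 1) else p j) :
    ∀ n, 1 ≤ n → n ≤ N → ∀ h, h ≤ (M - 1) ^ (N - n) - 1 →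
      ∀ j, 1 ≤ j → j ≤ (M - 1) ^ (n - 1) → ∀ i, i ≤ M - 2 →
      p (h * (M - 1) ^ n + i * (M - 1) ^ (n - 1) + j)
        = if n ∈ V then
            shiftedModNat (p (h * (M - 1) ^ n + 0 * (M - 1) ^ (n - 1) + j) + i) (M - 1)
          else p (h * (M - 1) ^ n + 0 * (M - 1) ^ (n - 1) + j) := by
  intro n hn1 hnN h hh j hj1 hjq i hiM
  obtain ⟨n, rfl⟩ : ∃ n', n = n' + 1 := ⟨n - 1, by omega⟩
  obtain ⟨y, rfl⟩ : ∃ y, j = y + 1 := ⟨j - 1, by omega⟩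
  rw [Nat.add_sub_cancel] at hjq ⊢
  have hy : y < (M - 1) ^ n := by omega
  have hh' : h < (M - 1) ^ (N - (n + 1)) := by
    have := Nat.one_le_pow (N - (n + 1)) (M - 1) (by omega)
    omega
  have closed_form {c : ℕ} (hc : c < M - 1) :
      p (h * (M - 1) ^ (n + 1) + c * (M - 1) ^ n + y + 1) =
        activeDigitSum (M - 1) N V (h * (M - 1) ^ (n + 1) + c * (M - 1) ^ n + y) % (M - 1) + 1 :=
    apply_succ_eq_activeDigitSum hbase (fun n h2 hnN i hi him => hstep n h2 hnN i hi (by omega))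
      (by omega) le_rfl <| by
        rw [add_assoc]
        exact mul_pow_add_lt_pow hnN hh' (mul_pow_add_lt_pow (Nat.le_succ n) (by simpa) hy)
  rw [← add_assoc, ← add_assoc, closed_form (by omega), closed_form (by omega),
    activeDigitSum_add_mul_pow_add V (by omega) hy hnN]
  simp only [zero_mul, add_zero]
  split_ifs
  · exact (shiftedModNat_mod_add_one_add _ _ _).symm
  · rfl

/-- Lemma 1 of the paper. Let `p` be the switching pattern produced by Algorithm 1,
characterized by: `p(t) = t` for `t ≤ M-1` if `1 ∈ V`, `p(t) = 1` for `t ≤ M-1` if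
`1 ∉ V`, and for `2 ≤ n ≤ N`, `1 ≤ i ≤ M-2`, `1 ≤ j ≤ (M-1)^(n-1)`,
`p(i·(M-1)^(n-1)+j) = Mod(p(j)+i, M-1)` if `n ∈ V` and `= p(j)` otherwise.
Then for `t(h,i,j) = h·(M-1)^n + i·(M-1)^(n-1) + j`: when `n ∉ V` the value
`p(t(h,i,j))` is constant in `i`, and when `n ∈ V` it equals
`Mod(p(t(h,0,j)) + i, M-1)`. -/
theorem switching_pattern_alignment (M N : ℕ) (hM : 2 ≤ M) (hN : 1 ≤ N)
    (V : Finset ℕ) (p : ℕ → ℕ)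
    (hbase : ∀ t, 1 ≤ t → t ≤ M - 1 → p t = if 1 ∈ V then t else 1)
    (hstep : ∀ n, 2 ≤ n → n ≤ N → ∀ i, 1 ≤ i → i ≤ M - 2 →
      ∀ j, 1 ≤ j → j ≤ (M - 1) ^ (n - 1) →
      p (i * (M - 1) ^ (n - 1) + j)
        = if n ∈ V then shiftedModNat (p j + i) (M - 1) else p j) :
    ∀ n, 1 ≤ n → n ≤ N → ∀ h, h ≤ (M - 1) ^ (N - n) - 1 →
      ∀ j, 1 ≤ j → j ≤ (M - 1) ^ (n - 1) → ∀ i, i ≤ M - 2 →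
      p (h * (M - 1) ^ n + i * (M - 1) ^ (n - 1) + j)
        = if n ∈ V then
            shiftedModNat (p (h * (M - 1) ^ n + 0 * (M - 1) ^ (n - 1) + j) + i) (M - 1)
          else p (h * (M - 1) ^ n + 0 * (M - 1) ^ (n - 1) + j) :=
  switching_pattern_alignment_general M N hM V p hbase hstep
end
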